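/- For every nonempty finite subset e ⊆ V with |e| ≤ N and every vector b : V → ℝ, the sum of the products of b over the entries of all ordered blowups of e is extracted from an exponential generating function: ∑_{i ∈ β(e)} ∏_{k=1}^{N} b(i_k) = N! · c_N, where c_N is the coefficient of X^N in the formal power series ∏_{u ∈ e} (exp(b(u)·X) − 1) over ℝ. -/

import Mathlib

/-- The set of ordered blowups of a finite subset `e` of the vertex set `V`:
all `N`-tuples of vertices whose set of entries is exactly `e`. -/
def blowups (V : Type*) [Fintype V] [DecidableEq V] (N : ℕ) (e : Finset V) :
    Finset (Fin N → V) :=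
  Finset.univ.filter (fun i => ∀ v : V, v ∈ e ↔ ∃ k : Fin N, i k = v)

/-!
The blowups of `e` are the `N`-tuples with entries in `e` that hit every vertex of `e`.
Inclusion–exclusion over the set `t ⊆ e` of missed vertices writes their weighted count as
`∑_{t ⊆ e} (-1)^|t| (∑_{u ∈ e \ t} b u)^N`. Expanding `∏_{u ∈ e} (exp(b u X) - 1)` over subsets
gives the same alternating sum of the series `exp((∑_{u ∈ e \ t} b u) X)`, whose `N`-th
coefficients are `(∑_{u ∈ e \ t} b u)^N / N!`.
-/

open Finset PowerSeries

section Blowups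

variable {V : Type*} [Fintype V] [DecidableEq V] {N : ℕ}

lemma mem_blowups {e : Finset V} {i : Fin N → V} : i ∈ blowups V N e ↔ univ.image i = e := by
  simp [blowups, Finset.ext_iff, eq_comm]

lemma inf_piFinset_compl_singleton (t : Finset V) :
    t.inf (fun u => Fintype.piFinset fun _ : Fin N => ({u}ᶜ : Finset V)) =
      Fintype.piFinset fun _ => tᶜ := by
  ext i
  simp only [Finset.mem_inf, Fintype.mem_piFinset, mem_compl, mem_singleton]
  exact ⟨fun h k hk => h _ hk k rfl, fun h u hu k hk => h k (hk ▸ hu)⟩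

lemma inf_compl_piFinset_compl_singleton (e : Finset V) :
    e.inf (fun u => (Fintype.piFinset fun _ : Fin N => ({u}ᶜ : Finset V))ᶜ) =
      univ.filter fun i : Fin N → V => e ⊆ univ.image i := by
  ext i
  simp [Finset.mem_inf, subset_iff]

variable {R : Type*} [CommRing R]

theorem sum_blowups_prod_eq_sum_powerset (e : Finset V) (b : V → R) :
    ∑ i ∈ blowups V N e, ∏ k, b (i k) =
      ∑ t ∈ e.powerset, (-1) ^ #t * (∑ u ∈ e \ t, b u) ^ N := by
  -- Weighting by `b` restricted to `e` kills every tuple leaving `e`, so inclusion–exclusion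
  -- can be run in all of `Fin N → V`.
  set c : V → R := fun u => if u ∈ e then b u else 0
  set S : V → Finset (Fin N → V) := fun u => Fintype.piFinset fun _ => {u}ᶜ
  have hsurj :
      ∑ i ∈ e.inf fun u => (S u)ᶜ, ∏ k, c (i k) = ∑ i ∈ blowups V N e, ∏ k, b (i k) := by
    rw [inf_compl_piFinset_compl_singleton]
    refine (sum_subset_zero_on_sdiff (fun i hi => ?_) (fun i hi => ?_) (fun i hi => ?_)).symm
    · simp [(mem_blowups.1 hi).symm]
    · obtain ⟨hsub, hne⟩ : e ⊆ univ.image i ∧ univ.image i ≠ e := by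
        simpa [mem_blowups] using hi
      obtain ⟨_, hv, hve⟩ := not_subset.1 fun h => hne (h.antisymm hsub)
      obtain ⟨k, -, rfl⟩ := mem_image.1 hv
      exact prod_eq_zero (mem_univ k) (if_neg hve)
    · refine prod_congr rfl fun k _ => (if_pos ?_).symm
      exact mem_blowups.1 hi ▸ mem_image_of_mem i (mem_univ k)
  have hmiss : ∀ t : Finset V, ∑ i ∈ t.inf S, ∏ k, c (i k) = (∑ u ∈ e \ t, b u) ^ N := by
    intro t
    rw [inf_piFinset_compl_singleton, ← sum_pow', sum_ite_mem, inter_comm, ← sdiff_eq_inter_compl]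
  rw [← hsurj, inclusion_exclusion_sum_inf_compl]
  simp [hmiss, zsmul_eq_mul]

end Blowups

section ExpSeries

variable {A : Type*} [CommRing A] [Algebra ℚ A]

lemma prod_rescale_exp {ι : Type*} (s : Finset ι) (a : ι → A) :
    ∏ i ∈ s, rescale (a i) (exp A) = rescale (∑ i ∈ s, a i) (exp A) := by
  classical
  induction s using Finset.induction_on with
  | empty => simp
  | insert i s hi ih => rw [prod_insert hi, sum_insert hi, ih, exp_mul_exp_eq_exp_add]

lemma prod_rescale_exp_sub_one {ι : Type*} [DecidableEq ι] (s : Finset ι) (a : ι → A) :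
    ∏ i ∈ s, (rescale (a i) (exp A) - 1) =
      ∑ t ∈ s.powerset, (-1) ^ #t * rescale (∑ i ∈ s \ t, a i) (exp A) := by
  simp [prod_sub, prod_rescale_exp]

lemma factorial_mul_coeff_rescale_exp (n : ℕ) (a : A) :
    (n.factorial : A) * coeff n (rescale a (exp A)) = a ^ n := by
  rw [coeff_rescale, coeff_exp, mul_left_comm, ← map_natCast (algebraMap ℚ A), ← map_mul,
    mul_one_div_cancel (by positivity), map_one, mul_one]

lemma factorial_mul_coeff_prod_rescale_exp_sub_one {ι : Type*} [DecidableEq ι] (n : ℕ)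
    (s : Finset ι) (a : ι → A) :
    (n.factorial : A) * coeff n (∏ i ∈ s, (rescale (a i) (exp A) - 1)) =
      ∑ t ∈ s.powerset, (-1) ^ #t * (∑ i ∈ s \ t, a i) ^ n := by
  rw [prod_rescale_exp_sub_one, map_sum, mul_sum]
  refine sum_congr rfl fun t _ => ?_
  rw [show (-1 : A⟦X⟧) ^ #t = C ((-1) ^ #t) by simp, coeff_C_mul, mul_left_comm,
    factorial_mul_coeff_rescale_exp]

end ExpSeries

theorem blowups_sum_eq_coeff_general (V : Type*) [Fintype V] [DecidableEq V]
    (N : ℕ) (e : Finset V) (b : V → ℝ) :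
    ∑ i ∈ blowups V N e, ∏ k, b (i k) =
      (N.factorial : ℝ) *
        PowerSeries.coeff (R := ℝ) N
          (∏ u ∈ e, (PowerSeries.rescale (b u) (PowerSeries.exp ℝ) - 1)) := by
  rw [sum_blowups_prod_eq_sum_powerset, factorial_mul_coeff_prod_rescale_exp_sub_one]

/-- For every nonempty `e ⊆ V` with `|e| ≤ N` and every vector `b : V → ℝ`,
`∑_{i ∈ β(e)} ∏_{k=1}^N b(i_k) = N! ⬝ c_N`, where `c_N` is the coefficient of
`X^N` in the formal power series `∏_{u ∈ e} (exp(b(u)·X) − 1)` over `ℝ`. -/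
theorem blowups_sum_eq_coeff (V : Type*) [Fintype V] [DecidableEq V]
    (N : ℕ) (hN : 2 ≤ N) (e : Finset V) (he : e.Nonempty) (hcard : e.card ≤ N)
    (b : V → ℝ) :
    ∑ i ∈ blowups V N e, ∏ k, b (i k) =
      (N.factorial : ℝ) *
        PowerSeries.coeff (R := ℝ) N
          (∏ u ∈ e, (PowerSeries.rescale (b u) (PowerSeries.exp ℝ) - 1)) :=
  blowups_sum_eq_coeff_general V N e b
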